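/- arXiv:1804.05629 — 2 statements merged into one kernel-verified Lean document; each statement's English description precedes it below -/
import Mathlib

section
/- Let D be a triangulated category with a t-structure with heart A and let X, Y ∈ A, n ≥ 2. A morphism f : X → Σ^n(Y) in D lies in the image of the canonical map θ^n_{X,Y} : Yext^n_A(X,Y) → Hom_D(X, Σ^n(Y)) if and only if f admits a factorization X → Σ(X_1) → Σ^2(X_2) → ⋯ → Σ^{n-1}(X_{n-1}) → Σ^n(Y) with each X_i an object of A. -/
/-!
Every morphism `δ : X ⟶ Σ Y` between objects of the heart is `θ¹` of a short exact sequence: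
complete `δ` to a triangle `Y ⟶ E ⟶ X ⟶ Σ Y`; the heart is closed under extensions, so `E` lies
in it, and since `Hom(X, Σⁿ Y) = 0` for `n < 0` on the heart the triangle is a short exact
sequence of `A`. Its `θ¹` is `δ`, because two triangles on the same two first morphisms have the same third
one as soon as `Hom(Σ Y, X) = 0`. As `θⁿ⁺¹` of a splice is `Σⁿ θ¹(s) ∘ θⁿ(ζ)`, induction on `n`
then shows that the image of `θⁿ` consists exactly of the composites of `n` shifted degree-one
morphisms between objects of the heart.
-/

open CategoryTheory Category Limits Pretriangulated Triangulated ZeroObject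

namespace HRS

variable (A : Type*) [Category A] [Abelian A]

/-- A short exact sequence `0 ⟶ Y ⟶ E ⟶ X ⟶ 0` in `A`, i.e. an extension of `X` by `Y`. -/
structure SES (X Y : A) where
  E : A
  i : Y ⟶ E
  p : E ⟶ X
  w : i ≫ p = 0
  ex : (ShortComplex.mk i p w).ShortExact

/-- A torsion pair `(T, F)` in the abelian category `A`. -/
structure TorsionPair (T F : A → Prop) : Prop where
  hom_zero : ∀ ⦃t f : A⦄, T t → F f → ∀ (g : t ⟶ f), g = 0
  exists_ses : ∀ X : A, ∃ (t f : A) (i : t ⟶ X) (p : X ⟶ f) (w : i ≫ p = 0),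
    T t ∧ F f ∧ (ShortComplex.mk i p w).ShortExact

/-- `n`-fold Yoneda extensions of `X` by `Y`, presented as iterated splices of
short exact sequences. -/
inductive ExtSeq : ℕ → A → A → Type _
  | base {X Y : A} (s : SES A X Y) : ExtSeq 1 X Y
  | splice {n : ℕ} {X Y Z : A} (s : SES A Z Y) (ξ : ExtSeq n X Z) : ExtSeq (n + 1) X Y

/-- Morphisms of Yoneda extensions over a pair of morphisms on the two end terms. -/
inductive ExtHom : ∀ {n : ℕ} {X X' Y Y' : A}, (Y ⟶ Y') → (X ⟶ X') →
    ExtSeq A n X Y → ExtSeq A n X' Y' → Prop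
  | base {X X' Y Y' : A} {a : Y ⟶ Y'} {b : X ⟶ X'} (s : SES A X Y) (s' : SES A X' Y')
      (e : s.E ⟶ s'.E) (h1 : s.i ≫ e = a ≫ s'.i) (h2 : s.p ≫ b = e ≫ s'.p) :
      ExtHom a b (.base s) (.base s')
  | splice {n : ℕ} {X X' Y Y' Z Z' : A} {a : Y ⟶ Y'} {b : X ⟶ X'} (t : Z ⟶ Z')
      (s : SES A Z Y) (s' : SES A Z' Y') (ξ : ExtSeq A n X Z) (ξ' : ExtSeq A n X' Z')
      (e : s.E ⟶ s'.E) (h1 : s.i ≫ e = a ≫ s'.i) (h2 : s.p ≫ t = e ≫ s'.p)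
      (h : ExtHom t b ξ ξ') :
      ExtHom a b (.splice s ξ) (.splice s' ξ')

/-- The Yoneda equivalence relation on `n`-fold extensions of `X` by `Y`: the equivalence
relation generated by the existence of a morphism of extensions which is the identity
on both end terms. -/
def ExtEquiv {n : ℕ} {X Y : A} (ξ ξ' : ExtSeq A n X Y) : Prop :=
  Relation.EqvGen (fun ζ ζ' => ExtHom A (𝟙 Y) (𝟙 X) ζ ζ') ξ ξ'

/-- The `n`-th Yoneda extension group (as a set) `Yext^n_A(X, Y)`. -/
def Yext (n : ℕ) (X Y : A) : Type _ :=
  Quot (fun ξ ξ' : ExtSeq A n X Y => ExtHom A (𝟙 Y) (𝟙 X) ξ ξ')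

/-- The class of an extension in `Yext`. -/
def Yext.mk {n : ℕ} {X Y : A} (ξ : ExtSeq A n X Y) : Yext A n X Y := Quot.mk _ ξ

/-- The short exact sequence `0 ⟶ Y ⟶ Y ⟶ 0 ⟶ 0`. -/
noncomputable def sesToZero (Y : A) : SES A (0 : A) Y where
  E := Y
  i := 𝟙 Y
  p := 0
  w := by simp
  ex := (ShortComplex.Splitting.shortExact
    { r := 𝟙 Y
      s := 0
      f_r := by simp
      s_g := by apply Subsingleton.elim
      id := by simp })

/-- The short exact sequence `0 ⟶ 0 ⟶ 0 ⟶ 0 ⟶ 0`. -/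
noncomputable def sesZero : SES A (0 : A) (0 : A) where
  E := 0
  i := 0
  p := 0
  w := by simp
  ex := (ShortComplex.Splitting.shortExact
    { r := 0
      s := 0
      f_r := by apply Subsingleton.elim
      s_g := by apply Subsingleton.elim
      id := by apply Subsingleton.elim })

/-- The short exact sequence `0 ⟶ 0 ⟶ X ⟶ X ⟶ 0`. -/
noncomputable def sesFromZero (X : A) : SES A X (0 : A) where
  E := X
  i := 0
  p := 𝟙 X
  w := by simp
  ex := (ShortComplex.Splitting.shortExact
    { r := 0
      s := 𝟙 X
      f_r := by apply Subsingleton.elim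
      s_g := by simp
      id := by simp })

/-- The trivial 3-fold extension `0 → Y → Y → 0 → X → X → 0`, representing the zero
class in `Yext^3_A(X, Y)`. -/
noncomputable def trivialExt3 (X Y : A) : ExtSeq A 3 X Y :=
  ExtSeq.splice (sesToZero A Y) (ExtSeq.splice (sesZero A) (ExtSeq.base (sesFromZero A X)))

/-- `Sub P`: subobjects of objects satisfying `P`. -/
def SubP (P : A → Prop) (X : A) : Prop := ∃ (U : A) (m : X ⟶ U), P U ∧ Mono m

/-- `Fac P`: quotient objects of objects satisfying `P`. -/
def FacP (P : A → Prop) (X : A) : Prop := ∃ (U : A) (p : U ⟶ X), P U ∧ Epi p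

/-- `P * Q`: objects that are extensions of an object satisfying `Q` by one satisfying `P`. -/
def StarP (P Q : A → Prop) (X : A) : Prop :=
  ∃ (u v : A) (i : u ⟶ X) (p : X ⟶ v) (w : i ≫ p = 0),
    P u ∧ Q v ∧ (ShortComplex.mk i p w).ShortExact

variable (D : Type*) [Category D] [HasZeroObject D] [Preadditive D] [HasShift D ℤ]
  [∀ n : ℤ, (shiftFunctor D n).Additive] [Pretriangulated D]

/-- The heart of a t-structure, as a predicate on objects. -/
def heartProp (t : TStructure D) (X : D) : Prop := t.le 0 X ∧ t.ge 0 X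

/-- A t-structure is bounded if every object lies in some `Σ^i D^{≤0} ∩ Σ^j D^{≥0}`. -/
def IsBoundedTStructure (t : TStructure D) : Prop := ∀ X : D, ∃ a b : ℤ, t.ge a X ∧ t.le b X

/-- Data realizing an abelian category `A` as the heart of a t-structure `t` on `D`:
a fully faithful additive functor `A ⥤ D` whose essential image is the heart of `t`. -/
structure HeartData (t : TStructure D) where
  ι : A ⥤ D
  additive : ι.Additive
  full : ι.Full
  faithful : ι.Faithful
  essImage_iff : ∀ X : D, ι.essImage X ↔ heartProp D t X

variable {A D}

/-- The property, for a family `θ` of maps from `n`-fold Yoneda extensions in the heart to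
`Hom_D(X, Σ^n Y)`, of being the canonical family: it descends to the Yoneda extension
groups, `θ^1` sends a short exact sequence to the connecting morphism of an associated
distinguished triangle, and `θ^{n+1}` is computed on splices by `Σ^n(θ^1 ξ₁) ∘ θ^n ξ₂`. -/
structure IsCanThetaFamily {t : TStructure D} (h : HeartData A D t)
    (θ : ∀ (n : ℕ) (X Y : A), ExtSeq A n X Y → (h.ι.obj X ⟶ (h.ι.obj Y)⟦(n : ℤ)⟧)) : Prop where
  compat : ∀ {n : ℕ} {X Y : A} (ξ ξ' : ExtSeq A n X Y), ExtEquiv A ξ ξ' →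
    θ n X Y ξ = θ n X Y ξ'
  base : ∀ {X Y : A} (s : SES A X Y),
    Triangle.mk (h.ι.map s.i) (h.ι.map s.p)
      (θ 1 X Y (.base s) ≫ eqToHom (by norm_num)) ∈ distTriang D
  splice : ∀ {n : ℕ} {X Y Z : A} (s : SES A Z Y) (ξ : ExtSeq A n X Z),
    θ (n + 1) X Y (.splice s ξ) = θ n X Z ξ ≫ (θ 1 Z Y (.base s))⟦(n : ℤ)⟧' ≫
      (shiftFunctorAdd' D ((1 : ℕ) : ℤ) ((n : ℕ) : ℤ) (((n + 1 : ℕ)) : ℤ)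
        (by push_cast; ring)).inv.app (h.ι.obj Y)

/-- The map induced by `θ^n` on the Yoneda extension group `Yext^n(X, Y)`. -/
def thetaBar {t : TStructure D} {h : HeartData A D t}
    (θ : ∀ (n : ℕ) (X Y : A), ExtSeq A n X Y → (h.ι.obj X ⟶ (h.ι.obj Y)⟦(n : ℤ)⟧))
    (hθ : IsCanThetaFamily h θ) (n : ℕ) (X Y : A) :
    Yext A n X Y → (h.ι.obj X ⟶ (h.ι.obj Y)⟦(n : ℤ)⟧) :=
  Quot.lift (θ n X Y) (fun ξ ξ' hr => hθ.compat ξ ξ' (Relation.EqvGen.rel _ _ hr))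

variable (A D)

/-- The image of a short exact sequence under an exact functor. -/
def mapSES {A' : Type*} [Category A'] [Abelian A'] (G : A' ⥤ A) [G.Additive]
    (hG : ∀ S : ShortComplex A', S.ShortExact → (S.map G).ShortExact)
    {X Y : A'} (s : SES A' X Y) : SES A (G.obj X) (G.obj Y) where
  E := G.obj s.E
  i := G.map s.i
  p := G.map s.p
  w := by rw [← G.map_comp, s.w]; exact G.map_zero _ _
  ex := hG _ s.ex

/-- The image of a Yoneda extension under an exact functor. -/
def mapExtSeq {A' : Type*} [Category A'] [Abelian A'] (G : A' ⥤ A) [G.Additive]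
    (hG : ∀ S : ShortComplex A', S.ShortExact → (S.map G).ShortExact) :
    ∀ {n : ℕ} {X Y : A'}, ExtSeq A' n X Y → ExtSeq A n (G.obj X) (G.obj Y)
  | _, _, _, .base s => .base (mapSES A G hG s)
  | _, _, _, .splice s ξ => .splice (mapSES A G hG s) (mapExtSeq G hG ξ)

/-- Composition of a chain of morphisms `Σ^i X_i ⟶ Σ^{i+1} X_{i+1}` in `D`,
with all `X_i` in the heart. -/
def chainComp (ι : A ⥤ D) (obj : ℕ → A)
    (g : ∀ i : ℕ, ((ι.obj (obj i))⟦((i : ℕ) : ℤ)⟧ ⟶ (ι.obj (obj (i + 1)))⟦(((i + 1 : ℕ)) : ℤ)⟧)) :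
    ∀ n : ℕ, ((ι.obj (obj 0))⟦((0 : ℕ) : ℤ)⟧ ⟶ (ι.obj (obj n))⟦((n : ℕ) : ℤ)⟧)
  | 0 => 𝟙 _
  | n + 1 => chainComp ι obj g n ≫ g n

/-- A model of the bounded derived category `D^b(A)` of an abelian category `A`:
a triangulated category equipped with a bounded t-structure whose heart is `A`,
such that the canonical maps `Yext^n_A(X, Y) → Hom(X, Σ^n Y)` are bijective for all
`n ≥ 1` (the characteristic-class isomorphisms of the bounded derived category). -/
structure DerivedData where
  t : TStructure D
  bounded : IsBoundedTStructure D t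
  heart : HeartData A D t
  θ : ∀ (n : ℕ) (X Y : A), ExtSeq A n X Y → (heart.ι.obj X ⟶ (heart.ι.obj Y)⟦(n : ℤ)⟧)
  can : IsCanThetaFamily heart θ
  bij : ∀ (n : ℕ), 1 ≤ n → ∀ (X Y : A), Function.Bijective (thetaBar θ can n X Y)

variable {A D}

/-- Membership in the HRS-tilt `B = Σ(F) * T` of `A` with respect to a torsion pair
`(T, F)`, for an object of (a model of) `D^b(A)`. -/
def HRSTiltMem {t : TStructure D} (h : HeartData A D t) (T F : A → Prop) (X : D) : Prop :=
  ∃ (f tt : A), F f ∧ T tt ∧ ∃ (g : (h.ι.obj f)⟦(1 : ℤ)⟧ ⟶ X) (g' : X ⟶ h.ι.obj tt)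
    (δ : h.ι.obj tt ⟶ ((h.ι.obj f)⟦(1 : ℤ)⟧)⟦(1 : ℤ)⟧), Triangle.mk g g' δ ∈ distTriang D

end HRS

lemma CategoryTheory.Pretriangulated.mor₃_eq_of_distTriang {C : Type*} [Category C]
    [HasZeroObject C] [Preadditive C] [HasShift C ℤ] [∀ n : ℤ, (shiftFunctor C n).Additive]
    [Pretriangulated C] {X₁ X₂ X₃ : C} {f : X₁ ⟶ X₂} {g : X₂ ⟶ X₃} {δ δ' : X₃ ⟶ X₁⟦(1 : ℤ)⟧}
    (hT : Triangle.mk f g δ ∈ distTriang C) (hT' : Triangle.mk f g δ' ∈ distTriang C)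
    (hX : ∀ l : X₁⟦(1 : ℤ)⟧ ⟶ X₃, l = 0) : δ = δ' := by
  obtain ⟨c, hc₂, hc₃⟩ := complete_distinguished_triangle_morphism _ _ hT hT' (𝟙 _) (𝟙 _)
    ((comp_id f).trans (id_comp f).symm)
  change X₃ ⟶ X₃ at c
  change g ≫ c = 𝟙 X₂ ≫ g at hc₂
  change δ ≫ (𝟙 X₁)⟦(1 : ℤ)⟧' = c ≫ δ' at hc₃
  obtain ⟨l, hl⟩ := Triangle.yoneda_exact₃ _ hT (c - 𝟙 X₃)
    (show g ≫ (c - 𝟙 X₃) = 0 by rw [Preadditive.comp_sub, hc₂, id_comp, comp_id, sub_self])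
  have hc : c = 𝟙 X₃ := sub_eq_zero.1 (by rw [hl, hX l]; exact comp_zero)
  simpa [hc] using hc₃

namespace HRS

section

variable {A : Type*} [Category A] {D : Type*} [Category D] [HasShift D ℤ]

lemma chainComp_congr (ι : A ⥤ D) {obj obj' : ℕ → A}
    {g : ∀ i : ℕ, (ι.obj (obj i))⟦(i : ℤ)⟧ ⟶ (ι.obj (obj (i + 1)))⟦((i + 1 : ℕ) : ℤ)⟧}
    {g' : ∀ i : ℕ, (ι.obj (obj' i))⟦(i : ℤ)⟧ ⟶ (ι.obj (obj' (i + 1)))⟦((i + 1 : ℕ) : ℤ)⟧}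
    (m : ℕ) (hobj : ∀ i ≤ m, obj i = obj' i)
    (hg : ∀ i (hi : i < m), g i ≫ eqToHom (by rw [hobj (i + 1) hi]) =
      eqToHom (by rw [hobj i hi.le]) ≫ g' i) :
    chainComp A D ι obj g m ≫ eqToHom (by rw [hobj m le_rfl]) =
      eqToHom (by rw [hobj 0 m.zero_le]) ≫ chainComp A D ι obj' g' m := by
  induction m with
  | zero => simp [chainComp]
  | succ k ih =>
    rw [chainComp, chainComp, assoc, hg k k.lt_succ_self, ← assoc,
      ih (fun i hi => hobj i (hi.trans k.le_succ)) (fun i hi => hg i (hi.trans k.lt_succ_self)),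
      assoc]

end

variable {A : Type*} [Category A] [Abelian A]
  {D : Type*} [Category D] [HasZeroObject D] [Preadditive D] [HasShift D ℤ]
  [∀ n : ℤ, (shiftFunctor D n).Additive] [Pretriangulated D] {t : TStructure D}

lemma heartProp_of_distTriang (T : Triangle D) (hT : T ∈ distTriang D)
    (h₁ : heartProp D t T.obj₁) (h₃ : heartProp D t T.obj₃) : heartProp D t T.obj₂ :=
  ⟨(t.isLE₂ T hT 0 ⟨h₁.1⟩ ⟨h₃.1⟩).le, (t.isGE₂ T hT 0 ⟨h₁.2⟩ ⟨h₃.2⟩).ge⟩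

namespace HeartData

variable (h : HeartData A D t)

attribute [local instance] additive full faithful

lemma heartProp_obj (X : A) : heartProp D t (h.ι.obj X) :=
  (h.essImage_iff _).1 ⟨X, ⟨Iso.refl _⟩⟩

lemma hom_shift_eq_zero_of_neg {X Y : A} {n : ℤ} (f : h.ι.obj X ⟶ (h.ι.obj Y)⟦n⟧)
    (hn : n < 0) : f = 0 :=
  t.zero_of_isLE_of_isGE f 0 (-n) (by omega) ⟨(h.heartProp_obj X).1⟩
    ⟨t.ge_shift 0 n (-n) (by omega) _ (h.heartProp_obj Y).2⟩

lemma shift_hom_eq_zero_of_pos {X Y : A} {n : ℤ} (f : (h.ι.obj X)⟦n⟧ ⟶ h.ι.obj Y)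
    (hn : 0 < n) : f = 0 :=
  AbelianSubcategory.eq_zero_of_hom_shift_pos
    (fun _ _ _ g hg => h.hom_shift_eq_zero_of_neg g hg) f hn

lemma exists_distTriang_of_hom_shift_one {X Y : A} (δ : h.ι.obj X ⟶ (h.ι.obj Y)⟦(1 : ℤ)⟧) :
    ∃ (E : A) (i : Y ⟶ E) (p : E ⟶ X),
      Triangle.mk (h.ι.map i) (h.ι.map p) δ ∈ distTriang D := by
  obtain ⟨E, i, p, hT⟩ := distinguished_cocone_triangle₂ δ
  obtain ⟨E₀, ⟨e⟩⟩ := (h.essImage_iff E).2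
    (heartProp_of_distTriang _ hT (h.heartProp_obj Y) (h.heartProp_obj X))
  refine ⟨E₀, h.ι.preimage (i ≫ e.inv), h.ι.preimage (e.hom ≫ p),
    isomorphic_distinguished _ hT _ (Triangle.isoMk _ _ (Iso.refl _) e (Iso.refl _) ?_ ?_ ?_)⟩
  · show h.ι.map (h.ι.preimage (i ≫ e.inv)) ≫ e.hom = 𝟙 _ ≫ i
    simp
  · show h.ι.map (h.ι.preimage (e.hom ≫ p)) ≫ 𝟙 _ = e.hom ≫ p
    simp
  · show δ ≫ (𝟙 (h.ι.obj Y))⟦(1 : ℤ)⟧' = 𝟙 _ ≫ δ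
    simp

noncomputable def sesOfDistTriang {X Y E : A} (i : Y ⟶ E) (p : E ⟶ X)
    (δ : h.ι.obj X ⟶ (h.ι.obj Y)⟦(1 : ℤ)⟧)
    (hT : Triangle.mk (h.ι.map i) (h.ι.map p) δ ∈ distTriang D) : SES A X Y :=
  have hι : ∀ ⦃X Y : A⦄ ⦃n : ℤ⦄ (f : h.ι.obj X ⟶ (h.ι.obj Y)⟦n⟧), n < 0 → f = 0 :=
    fun _ _ _ f hf => h.hom_shift_eq_zero_of_neg f hf
  have hw : i ≫ p = 0 := h.ι.map_injective (by
    rw [Functor.map_comp, Functor.map_zero]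
    exact comp_distTriang_mor_zero₁₂ _ hT)
  have hker := AbelianSubcategory.isLimitKernelForkOfDistTriang hι i p δ hT
  have hcoker := AbelianSubcategory.isColimitCokernelCoforkOfDistTriang hι i p δ hT
  { E := E, i := i, p := p, w := hw
    ex := .mk' (S := .mk i p hw) (ShortComplex.exact_of_f_is_kernel _ hker)
      (mono_of_isLimit_fork hker) (epi_of_isColimit_cofork hcoker) }

end HeartData

/-- `f : X ⟶ Σⁿ Y` is a composite `X → Σ X₁ → ⋯ → Σⁿ⁻¹ Xₙ₋₁ → Σⁿ Y` with all `Xᵢ` in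
the heart. -/
def IsHeartChainComposite (h : HeartData A D t) (n : ℕ) (X Y : A)
    (f : h.ι.obj X ⟶ (h.ι.obj Y)⟦(n : ℤ)⟧) : Prop :=
  ∃ (obj : ℕ → A) (h0 : obj 0 = X) (hn' : obj n = Y)
    (g : ∀ i : ℕ, ((h.ι.obj (obj i))⟦((i : ℕ) : ℤ)⟧ ⟶
      (h.ι.obj (obj (i + 1)))⟦(((i + 1 : ℕ)) : ℤ)⟧)),
    f = (shiftFunctorZero D ℤ).inv.app (h.ι.obj X) ≫ eqToHom (by rw [h0]; norm_num) ≫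
      chainComp A D h.ι obj g n ≫ eqToHom (by rw [hn'])

namespace IsHeartChainComposite

variable {h : HeartData A D t}

lemma one {X Y : A} (f : h.ι.obj X ⟶ (h.ι.obj Y)⟦((1 : ℕ) : ℤ)⟧) :
    IsHeartChainComposite h 1 X Y f :=
  ⟨fun | 0 => X | _ + 1 => Y, rfl, rfl,
    fun | 0 => eqToHom (by norm_num) ≫ (shiftFunctorZero D ℤ).hom.app (h.ι.obj X) ≫ f
        | _ + 1 => 0,
    by simp [chainComp]⟩

lemma comp {n : ℕ} {X Z Y : A} {u : h.ι.obj X ⟶ (h.ι.obj Z)⟦(n : ℤ)⟧}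
    (hu : IsHeartChainComposite h n X Z u)
    (v : (h.ι.obj Z)⟦(n : ℤ)⟧ ⟶ (h.ι.obj Y)⟦((n + 1 : ℕ) : ℤ)⟧) :
    IsHeartChainComposite h (n + 1) X Y (u ≫ v) := by
  classical
  obtain ⟨obj, h0, hn, g, rfl⟩ := hu
  let obj' := Function.update obj (n + 1) Y
  have hobj : ∀ i ≤ n, obj i = obj' i := fun i hi =>
    (Function.update_of_ne (by omega) _ _).symm
  have hY : obj' (n + 1) = Y := Function.update_self ..
  let g' : ∀ i : ℕ, ((h.ι.obj (obj' i))⟦((i : ℕ) : ℤ)⟧ ⟶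
      (h.ι.obj (obj' (i + 1)))⟦(((i + 1 : ℕ)) : ℤ)⟧) := fun i =>
    if hi : i = n then
      eqToHom (by rw [hi, ← hobj n le_rfl, hn]) ≫ v ≫ eqToHom (by rw [hi, hY])
    else if hi' : i < n then
      eqToHom (by rw [hobj i hi'.le]) ≫ g i ≫ eqToHom (by rw [hobj (i + 1) hi'])
    else 0
  have hchain : chainComp A D h.ι obj' g' n = eqToHom (by rw [hobj 0 n.zero_le]) ≫
      chainComp A D h.ι obj g n ≫ eqToHom (by rw [hobj n le_rfl]) := by
    rw [chainComp_congr h.ι (g' := g') n hobj (fun i hi => by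
      simp [g', dif_neg (show i ≠ n by omega), dif_pos hi])]
    simp
  refine ⟨obj', by rw [← hobj 0 n.zero_le, h0], hY, g', ?_⟩
  rw [chainComp, hchain]
  simp [g']

lemma exists_eq_comp {n : ℕ} {X Y : A} {f : h.ι.obj X ⟶ (h.ι.obj Y)⟦((n + 1 : ℕ) : ℤ)⟧}
    (hf : IsHeartChainComposite h (n + 1) X Y f) :
    ∃ (Z : A) (u : h.ι.obj X ⟶ (h.ι.obj Z)⟦(n : ℤ)⟧)
      (v : (h.ι.obj Z)⟦(n : ℤ)⟧ ⟶ (h.ι.obj Y)⟦((n + 1 : ℕ) : ℤ)⟧),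
      IsHeartChainComposite h n X Z u ∧ f = u ≫ v := by
  obtain ⟨obj, h0, hn, g, rfl⟩ := hf
  exact ⟨obj n, _, g n ≫ eqToHom (by rw [hn]), ⟨obj, h0, rfl, g, rfl⟩, by simp [chainComp]⟩

end IsHeartChainComposite

namespace IsCanThetaFamily

variable {h : HeartData A D t}
  {θ : ∀ (n : ℕ) (X Y : A), ExtSeq A n X Y → (h.ι.obj X ⟶ (h.ι.obj Y)⟦(n : ℤ)⟧)}

lemma exists_theta_one_eq (hθ : IsCanThetaFamily h θ) {X Y : A}
    (δ : h.ι.obj X ⟶ (h.ι.obj Y)⟦((1 : ℕ) : ℤ)⟧) : ∃ s : SES A X Y, θ 1 X Y (.base s) = δ := by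
  have hcast : (h.ι.obj Y)⟦((1 : ℕ) : ℤ)⟧ = (h.ι.obj Y)⟦(1 : ℤ)⟧ := by norm_num
  obtain ⟨E, i, p, hT⟩ := h.exists_distTriang_of_hom_shift_one (δ ≫ eqToHom hcast)
  refine ⟨h.sesOfDistTriang i p _ hT, ?_⟩
  have hδ := mor₃_eq_of_distTriang (hθ.base (h.sesOfDistTriang i p _ hT)) hT
    (fun l => h.shift_hom_eq_zero_of_pos l one_pos)
  simpa using hδ

lemma isHeartChainComposite_theta (hθ : IsCanThetaFamily h θ) {n : ℕ} {X Y : A}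
    (ξ : ExtSeq A n X Y) : IsHeartChainComposite h n X Y (θ n X Y ξ) := by
  induction ξ with
  | base s => exact .one _
  | splice s ζ ih =>
    rw [hθ.splice s ζ]
    exact ih.comp _

lemma exists_theta_eq (hθ : IsCanThetaFamily h θ) {n : ℕ} (hn : 1 ≤ n) {X Y : A}
    {f : h.ι.obj X ⟶ (h.ι.obj Y)⟦(n : ℤ)⟧}
    (hf : IsHeartChainComposite h n X Y f) : ∃ ξ : ExtSeq A n X Y, θ n X Y ξ = f := by
  induction n, hn using Nat.le_induction generalizing Y with
  | base => obtain ⟨s, hs⟩ := hθ.exists_theta_one_eq f; exact ⟨.base s, hs⟩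
  | succ n hn ih =>
    obtain ⟨Z, u, v, hu, rfl⟩ := hf.exists_eq_comp
    obtain ⟨ζ, rfl⟩ := ih hu
    obtain ⟨s, hs⟩ := hθ.exists_theta_one_eq ((shiftFunctor D (n : ℤ)).preimage
      (v ≫ (shiftFunctorAdd' D ((1 : ℕ) : ℤ) n (n + 1 : ℕ) (by push_cast; ring)).hom.app _))
    refine ⟨.splice s ζ, ?_⟩
    rw [hθ.splice, hs, Functor.map_preimage]
    simp

end IsCanThetaFamily

/-- A morphism `f : X → Σ^n Y` lies in the image of the canonical map
`θ^n` if and only if it factors as `X → Σ X₁ → Σ² X₂ → ⋯ → Σ^{n-1} X_{n-1} → Σ^n Y`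
with all `Xᵢ` in the heart. -/
theorem statement_6 {A : Type*} [Category A] [Abelian A]
    {D : Type*} [Category D] [HasZeroObject D] [Preadditive D] [HasShift D ℤ]
    [∀ n : ℤ, (shiftFunctor D n).Additive] [Pretriangulated D]
    {t : TStructure D} (h : HeartData A D t)
    (θ : ∀ (n : ℕ) (X Y : A), ExtSeq A n X Y → (h.ι.obj X ⟶ (h.ι.obj Y)⟦(n : ℤ)⟧))
    (hθ : IsCanThetaFamily h θ) (n : ℕ) (hn : 2 ≤ n) (X Y : A)
    (f : h.ι.obj X ⟶ (h.ι.obj Y)⟦(n : ℤ)⟧) :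
    (∃ ξ : ExtSeq A n X Y, θ n X Y ξ = f) ↔
      ∃ (obj : ℕ → A) (h0 : obj 0 = X) (hn' : obj n = Y)
        (g : ∀ i : ℕ, ((h.ι.obj (obj i))⟦((i : ℕ) : ℤ)⟧ ⟶
          (h.ι.obj (obj (i + 1)))⟦(((i + 1 : ℕ)) : ℤ)⟧)),
        f = (shiftFunctorZero D ℤ).inv.app (h.ι.obj X) ≫ eqToHom (by rw [h0]; norm_num) ≫
          chainComp A D h.ι obj g n ≫ eqToHom (by rw [hn']) := by
  show _ ↔ IsHeartChainComposite h n X Y f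
  refine ⟨?_, hθ.exists_theta_eq (by omega)⟩
  rintro ⟨ξ, rfl⟩
  exact hθ.isHeartChainComposite_theta ξ

end HRS
end

section
/- Let A, A' be abelian categories with torsion pairs (T, F) and (T', F'), and G : A' → A an exact additive functor with G(T') ⊆ T, G(F') ⊆ F, with G|_{T'} and G|_{F'} fully faithful, inducing surjections on Hom(F', T') and injections on Yext^1(F', T'). Then G is an equivalence if and only if both restrictions G|_{T'} : T' → T and G|_{F'} : F' → F are equivalences and G induces isomorphisms Yext^1_{A'}(F', T') → Yext^1_A(G F', G T') for all T' ∈ T', F' ∈ F'. -/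
open CategoryTheory Category Limits Pretriangulated Triangulated ZeroObject

namespace HRS

variable (A : Type*) [Category A] [Abelian A]

variable (D : Type*) [Category D] [HasZeroObject D] [Preadditive D] [HasShift D ℤ]
  [∀ n : ℤ, (shiftFunctor D n).Additive] [Pretriangulated D]

variable {A D}

variable (A D)

variable {A D}

/-! If `G` is an equivalence, take a preimage `X` of `x ∈ T` and its torsion sequence
`0 → t → X → f → 0`: `G X ⟶ G f` goes from `T` to `F`, so it is a zero epimorphism and `f = 0`;
dually for `F`. Extensions lift along a fully faithful functor once their middle term does.

Conversely, if `G g = 0` then `G (im g) = 0` by exactness, and both torsion parts of `im g` are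
killed by `G`, hence zero: `G` is faithful. A map `h : G X ⟶ G Y` restricts to the torsion parts
and induces one on the torsion-free parts; lift these to `a` and `b`. A morphism of extensions
over `(a, b)` exists iff `a_* s ~ b^* s'`, a condition that commutes with `G`, so injectivity on
`Yext^1(F', T')` gives `g : X ⟶ Y` over `(a, b)`. Then `h - G g` factors through
`G fX ⟶ G tY`, where `G` is surjective: `G` is full. Every object of `A` is an extension of an
object of `F` by one of `T`, and such extensions lift, so `G` is essentially surjective. -/

section Extensions

variable {C : Type*} [Category C] [Abelian C]

lemma ExtSeq.exists_eq_base {X Y : C} : ∀ ξ : ExtSeq C 1 X Y, ∃ s, ξ = .base s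
  | .base s => ⟨s, rfl⟩

lemma extHom_base_iff {X X' Y Y' : C} {a : Y ⟶ Y'} {b : X ⟶ X'} {s : SES C X Y}
    {s' : SES C X' Y'} :
    ExtHom C a b (.base s) (.base s') ↔
      ∃ e : s.E ⟶ s'.E, s.i ≫ e = a ≫ s'.i ∧ s.p ≫ b = e ≫ s'.p := by
  constructor
  · rintro (⟨_, _, e, h₁, h₂⟩)
    exact ⟨e, h₁, h₂⟩
  · rintro ⟨e, h₁, h₂⟩
    exact .base s s' e h₁ h₂

lemma ExtHom.comp_base {X X' X'' Y Y' Y'' : C} {a : Y ⟶ Y'} {b : X ⟶ X'} {a' : Y' ⟶ Y''}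
    {b' : X' ⟶ X''} {s : SES C X Y} {s' : SES C X' Y'} {s'' : SES C X'' Y''}
    (h : ExtHom C a b (.base s) (.base s')) (h' : ExtHom C a' b' (.base s') (.base s'')) :
    ExtHom C (a ≫ a') (b ≫ b') (.base s) (.base s'') := by
  obtain ⟨e, he₁, he₂⟩ := extHom_base_iff.1 h
  obtain ⟨e', he₁', he₂'⟩ := extHom_base_iff.1 h'
  refine extHom_base_iff.2 ⟨e ≫ e', ?_, ?_⟩
  · rw [reassoc_of% he₁, he₁', assoc]
  · rw [reassoc_of% he₂, he₂', assoc]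

lemma ExtHom.exists_isIso_base {X Y : C} {s s' : SES C X Y}
    (h : ExtHom C (𝟙 Y) (𝟙 X) (.base s) (.base s')) :
    ∃ e : s.E ⟶ s'.E, IsIso e ∧ s.i ≫ e = s'.i ∧ e ≫ s'.p = s.p := by
  obtain ⟨e, h₁, h₂⟩ := extHom_base_iff.1 h
  let φ : ShortComplex.mk s.i s.p s.w ⟶ ShortComplex.mk s'.i s'.p s'.w :=
    { τ₁ := 𝟙 Y, τ₂ := e, τ₃ := 𝟙 X, comm₁₂ := h₁.symm, comm₂₃ := h₂.symm }
  have : IsIso e := ShortComplex.isIso₂_of_shortExact_of_isIso₁₃ φ s.ex s'.ex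
  exact ⟨e, inferInstance, by simpa using h₁, by simpa using h₂.symm⟩

lemma ExtHom.symm_base {X Y : C} {s s' : SES C X Y}
    (h : ExtHom C (𝟙 Y) (𝟙 X) (.base s) (.base s')) :
    ExtHom C (𝟙 Y) (𝟙 X) (.base s') (.base s) := by
  obtain ⟨e, _, h₁, h₂⟩ := h.exists_isIso_base
  refine extHom_base_iff.2 ⟨inv e, ?_, ?_⟩
  · rw [← h₁, assoc, IsIso.hom_inv_id, comp_id, id_comp]
  · rw [← h₂, IsIso.inv_hom_id_assoc, comp_id]

lemma equivalence_extHom_id (X Y : C) :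
    Equivalence (fun ξ ζ : ExtSeq C 1 X Y => ExtHom C (𝟙 Y) (𝟙 X) ξ ζ) where
  refl ξ := by
    obtain ⟨s, rfl⟩ := ξ.exists_eq_base
    exact extHom_base_iff.2 ⟨𝟙 _, by simp, by simp⟩
  symm {ξ ζ} h := by
    obtain ⟨s, rfl⟩ := ξ.exists_eq_base
    obtain ⟨s', rfl⟩ := ζ.exists_eq_base
    exact h.symm_base
  trans {ξ ζ η} h h' := by
    obtain ⟨s, rfl⟩ := ξ.exists_eq_base
    obtain ⟨s', rfl⟩ := ζ.exists_eq_base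
    obtain ⟨s'', rfl⟩ := η.exists_eq_base
    simpa using h.comp_base h'

lemma extEquiv_one_iff {X Y : C} {ξ ζ : ExtSeq C 1 X Y} :
    ExtEquiv C ξ ζ ↔ ExtHom C (𝟙 Y) (𝟙 X) ξ ζ :=
  (equivalence_extHom_id X Y).eqvGen_iff

lemma SES.exists_comm_sq_of_comp_comp_eq_zero {X X' Y Y' : C} (s : SES C X Y)
    (s' : SES C X' Y') (h : s.E ⟶ s'.E) (hz : s.i ≫ h ≫ s'.p = 0) :
    ∃ (a : Y ⟶ Y') (b : X ⟶ X'), s.i ≫ h = a ≫ s'.i ∧ s.p ≫ b = h ≫ s'.p := by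
  obtain ⟨a, ha⟩ := KernelFork.IsLimit.lift' s'.ex.fIsKernel (s.i ≫ h) (by simpa using hz)
  obtain ⟨b, hb⟩ := CokernelCofork.IsColimit.desc' s.ex.gIsCokernel (h ≫ s'.p) hz
  exact ⟨a, b, ha.symm, hb⟩

lemma SES.exists_eq_comp_of_comp_eq_zero {X X' Y Y' : C} (s : SES C X Y) (s' : SES C X' Y')
    (d : s.E ⟶ s'.E) (h₁ : s.i ≫ d = 0) (h₂ : d ≫ s'.p = 0) :
    ∃ c : X ⟶ Y', d = s.p ≫ c ≫ s'.i := by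
  have : Mono s'.i := s'.ex.mono_f
  obtain ⟨u, hu⟩ := KernelFork.IsLimit.lift' s'.ex.fIsKernel d h₂
  have hu' : u ≫ s'.i = d := hu
  obtain ⟨c, hc⟩ := CokernelCofork.IsColimit.desc' s.ex.gIsCokernel u
    (by rw [← cancel_mono s'.i, assoc, hu', h₁, zero_comp])
  have hc' : s.p ≫ c = u := hc
  exact ⟨c, by rw [reassoc_of% hc', hu']⟩

end Extensions

section PushoutPullback

variable {C : Type*} [Category C] [Abelian C]

lemma SES.shortExact_pushout {X Y Y' : C} (s : SES C X Y) (a : Y ⟶ Y')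
    (w : pushout.inl a s.i ≫ pushout.desc (0 : Y' ⟶ X) s.p (by simp [s.w]) = 0) :
    (ShortComplex.mk _ _ w).ShortExact := by
  have : Epi s.p := s.ex.epi_g
  have : Mono s.i := s.ex.mono_f
  have : Epi (pushout.desc (f := a) (g := s.i) 0 s.p (by simp [s.w])) :=
    epi_of_epi_fac (pushout.inr_desc _ _ _)
  refine .mk' (ShortComplex.exact_of_g_is_cokernel _ ?_) inferInstance inferInstance
  refine CokernelCofork.IsColimit.ofπ' _ _ fun {W} k hk => ?_
  have hik : s.i ≫ pushout.inr a s.i ≫ k = 0 := by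
    rw [← pushout.condition_assoc, hk, comp_zero]
  obtain ⟨l, hl⟩ := CokernelCofork.IsColimit.desc' s.ex.gIsCokernel _ hik
  exact ⟨l, pushout.hom_ext (by simpa [pushout.inl_desc_assoc] using hk.symm)
    (by simpa [pushout.inr_desc_assoc] using hl)⟩

lemma SES.shortExact_pullback {X X' Y : C} (s : SES C X Y) (b : X' ⟶ X)
    (w : pullback.lift s.i (0 : Y ⟶ X') (by simp [s.w]) ≫ pullback.snd s.p b = 0) :
    (ShortComplex.mk _ _ w).ShortExact := by
  have : Epi s.p := s.ex.epi_g
  have : Mono s.i := s.ex.mono_f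
  have : Mono (pullback.lift (f := s.p) (g := b) s.i 0 (by simp [s.w])) :=
    mono_of_mono_fac (pullback.lift_fst _ _ _)
  refine .mk' (ShortComplex.exact_of_f_is_kernel _ ?_) inferInstance inferInstance
  refine KernelFork.IsLimit.ofι' _ _ fun {W} k hk => ?_
  have hkp : (k ≫ pullback.fst s.p b) ≫ s.p = 0 := by
    rw [assoc, pullback.condition, ← assoc, hk, zero_comp]
  obtain ⟨l, hl⟩ := KernelFork.IsLimit.lift' s.ex.fIsKernel _ hkp
  exact ⟨l, pullback.hom_ext (by simpa [pullback.lift_fst] using hl)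
    (by simpa [pullback.lift_snd] using hk.symm)⟩

noncomputable def SES.pushoutAlong {X Y Y' : C} (s : SES C X Y) (a : Y ⟶ Y') : SES C X Y' where
  E := pushout a s.i
  i := pushout.inl a s.i
  p := pushout.desc 0 s.p (by simp [s.w])
  w := pushout.inl_desc _ _ _
  ex := s.shortExact_pushout a _

noncomputable def SES.pullbackAlong {X X' Y : C} (s : SES C X Y) (b : X' ⟶ X) : SES C X' Y where
  E := pullback s.p b
  i := pullback.lift s.i 0 (by simp [s.w])
  p := pullback.snd s.p b
  w := pullback.lift_snd _ _ _
  ex := s.shortExact_pullback b _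

variable {X X' Y Y' : C}

lemma extHom_pushoutAlong (s : SES C X Y) (a : Y ⟶ Y') :
    ExtHom C a (𝟙 X) (.base s) (.base (s.pushoutAlong a)) :=
  extHom_base_iff.2 ⟨pushout.inr a s.i, pushout.condition.symm,
    (comp_id _).trans (pushout.inr_desc _ _ _).symm⟩

lemma extHom_pullbackAlong (s : SES C X Y) (b : X' ⟶ X) :
    ExtHom C (𝟙 Y) b (.base (s.pullbackAlong b)) (.base s) :=
  extHom_base_iff.2 ⟨pullback.fst s.p b,
    (pullback.lift_fst _ _ _).trans (id_comp _).symm, pullback.condition.symm⟩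

lemma ExtHom.pushoutAlong_base {a : Y ⟶ Y'} {b : X ⟶ X'} {s : SES C X Y} {s' : SES C X' Y'}
    (h : ExtHom C a b (.base s) (.base s')) :
    ExtHom C (𝟙 Y') b (.base (s.pushoutAlong a)) (.base s') := by
  obtain ⟨e, h₁, h₂⟩ := extHom_base_iff.1 h
  refine extHom_base_iff.2
    ⟨pushout.desc s'.i e h₁.symm, (pushout.inl_desc _ _ _).trans (id_comp _).symm, ?_⟩
  refine pushout.hom_ext ?_ ?_ <;> dsimp only [SES.pushoutAlong] <;>
    simp [pushout.inl_desc_assoc, pushout.inr_desc_assoc, s'.w, h₂]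

lemma ExtHom.pullbackAlong_base {a : Y ⟶ Y'} {b : X ⟶ X'} {s : SES C X Y} {s' : SES C X' Y'}
    (h : ExtHom C a b (.base s) (.base s')) :
    ExtHom C a (𝟙 X) (.base s) (.base (s'.pullbackAlong b)) := by
  obtain ⟨e, h₁, h₂⟩ := extHom_base_iff.1 h
  refine extHom_base_iff.2
    ⟨pullback.lift e s.p h₂.symm, ?_, (comp_id _).trans (pullback.lift_snd _ _ _).symm⟩
  refine pullback.hom_ext ?_ ?_ <;> dsimp only [SES.pullbackAlong] <;>
    simp [pullback.lift_fst, pullback.lift_snd, s.w, h₁]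

lemma extHom_base_iff_pushoutAlong_pullbackAlong {a : Y ⟶ Y'} {b : X ⟶ X'} {s : SES C X Y}
    {s' : SES C X' Y'} :
    ExtHom C a b (.base s) (.base s') ↔
      ExtHom C (𝟙 Y') (𝟙 X) (.base (s.pushoutAlong a)) (.base (s'.pullbackAlong b)) := by
  refine ⟨fun h => h.pushoutAlong_base.pullbackAlong_base, fun h => ?_⟩
  simpa using ((extHom_pushoutAlong s a).comp_base h).comp_base (extHom_pullbackAlong s' b)

end PushoutPullback

section ExactFunctor

variable {A A' : Type*} [Category A] [Abelian A] [Category A'] [Abelian A'] (G : A' ⥤ A)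
  [G.Additive] (hex : ∀ S : ShortComplex A', S.ShortExact → (S.map G).ShortExact)

lemma ExtHom.map_base {X X' Y Y' : A'} {a : Y ⟶ Y'} {b : X ⟶ X'} {s : SES A' X Y}
    {s' : SES A' X' Y'} (h : ExtHom A' a b (.base s) (.base s')) :
    ExtHom A (G.map a) (G.map b) (.base (mapSES A G hex s)) (.base (mapSES A G hex s')) := by
  obtain ⟨e, h₁, h₂⟩ := extHom_base_iff.1 h
  refine extHom_base_iff.2 ⟨G.map e, ?_, ?_⟩ <;> dsimp only [mapSES] <;>
    simp only [← G.map_comp, h₁, h₂]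

lemma extHom_mapSES_pushoutAlong {X Y Y' : A'} (s : SES A' X Y) (a : Y ⟶ Y') :
    ExtHom A (𝟙 _) (𝟙 _) (.base ((mapSES A G hex s).pushoutAlong (G.map a)))
      (.base (mapSES A G hex (s.pushoutAlong a))) := by
  have h := (extHom_pushoutAlong s a).map_base G hex
  rw [G.map_id] at h
  exact h.pushoutAlong_base

lemma extHom_mapSES_pullbackAlong {X X' Y : A'} (s : SES A' X Y) (b : X' ⟶ X) :
    ExtHom A (𝟙 _) (𝟙 _) (.base (mapSES A G hex (s.pullbackAlong b)))
      (.base ((mapSES A G hex s).pullbackAlong (G.map b))) := by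
  have h := (extHom_pullbackAlong s b).map_base G hex
  rw [G.map_id] at h
  exact h.pullbackAlong_base

lemma ExtHom.of_map_base {X X' Y Y' : A'}
    (hinj : ∀ s s' : SES A' X Y', ExtEquiv A (.base (mapSES A G hex s))
      (.base (mapSES A G hex s')) → ExtEquiv A' (.base s) (.base s'))
    {a : Y ⟶ Y'} {b : X ⟶ X'} {s : SES A' X Y} {s' : SES A' X' Y'}
    (h : ExtHom A (G.map a) (G.map b) (.base (mapSES A G hex s)) (.base (mapSES A G hex s'))) :
    ExtHom A' a b (.base s) (.base s') := by
  rw [extHom_base_iff_pushoutAlong_pullbackAlong, ← extEquiv_one_iff] at h ⊢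
  refine hinj _ _ (.trans _ _ _ (.rel _ _ (extHom_mapSES_pushoutAlong G hex s a).symm_base) ?_)
  exact .trans _ _ _ h (.rel _ _ (extHom_mapSES_pullbackAlong G hex s' b).symm_base)

lemma exists_extEquiv_mapSES [G.Full] [G.Faithful] {X Y E : A'}
    (s : SES A (G.obj X) (G.obj Y)) (e : G.obj E ≅ s.E) :
    ∃ s' : SES A' X Y, ExtEquiv A (.base (mapSES A G hex s')) (.base s) := by
  let i := G.preimage (s.i ≫ e.inv)
  let p := G.preimage (e.hom ≫ s.p)
  have w : i ≫ p = 0 := G.map_injective (by simp [i, p, s.w])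
  have hs : ((ShortComplex.mk i p w).map G).ShortExact :=
    ShortComplex.shortExact_of_iso
      (ShortComplex.isoMk (S₁ := .mk s.i s.p s.w) (Iso.refl _) e.symm (Iso.refl _)
        (by simp [i]; exact id_comp _)
        (by simp [p]; exact (e.inv_hom_id_assoc _).trans (comp_id _).symm)) s.ex
  refine ⟨⟨E, i, p, w, ShortExact.reflects_shortExact_of_faithful G hs⟩, ?_⟩
  exact extEquiv_one_iff.2 (extHom_base_iff.2 ⟨e.hom, by simp [mapSES, i], by simp [mapSES, p]⟩)

end ExactFunctor

section Criterion

variable {A A' : Type*} [Category A] [Abelian A] [Category A'] [Abelian A'] (G : A' ⥤ A)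
  [G.Additive] {T F : A → Prop} {T' F' : A' → Prop}

lemma isZero_of_injective_map {X : A'} (hX : Function.Injective (fun g : X ⟶ X => G.map g))
    (h : IsZero (G.obj X)) : IsZero X :=
  (IsZero.iff_id_eq_zero X).2 (hX (by simpa using h.eq_of_src _ _))

lemma TorsionPair.isZero_of_isZero_map (tp : TorsionPair A' T' F')
    (hex : ∀ S : ShortComplex A', S.ShortExact → (S.map G).ShortExact)
    (hT' : ∀ x, T' x → Function.Injective (fun g : x ⟶ x => G.map g))
    (hF' : ∀ x, F' x → Function.Injective (fun g : x ⟶ x => G.map g))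
    {X : A'} (h : IsZero (G.obj X)) : IsZero X := by
  obtain ⟨t, f, i, p, w, ht, hf, hs⟩ := tp.exists_ses X
  have hGs := hex _ hs
  have : Mono (G.map i) := hGs.mono_f
  have : Epi (G.map p) := hGs.epi_g
  have ht₀ : IsZero t := isZero_of_injective_map G (hT' t ht) (h.of_mono (G.map i))
  have hf₀ : IsZero f := isZero_of_injective_map G (hF' f hf) (h.of_epi (G.map p))
  exact hs.exact.isZero_X₂ (ht₀.eq_of_src _ _) (hf₀.eq_of_tgt _ _)

lemma TorsionPair.faithful_of_injective_map (tp : TorsionPair A' T' F')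
    (hex : ∀ S : ShortComplex A', S.ShortExact → (S.map G).ShortExact)
    (hT' : ∀ x y, T' x → T' y → Function.Injective (fun g : x ⟶ y => G.map g))
    (hF' : ∀ x y, F' x → F' y → Function.Injective (fun g : x ⟶ y => G.map g)) :
    G.Faithful := by
  -- `G` preserves finite limits and colimits, hence monos and epis
  obtain ⟨_, _⟩ := ((Functor.exact_tfae G).out 0 3).1 hex
  refine ⟨fun {X Y} g₁ g₂ hg => sub_eq_zero.1 ?_⟩
  set g := g₁ - g₂
  have hι : G.map (Abelian.image.ι g) = 0 := by
    rw [← cancel_epi (G.map (Abelian.factorThruImage g)), ← G.map_comp, Abelian.image.fac,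
      G.map_sub, hg, sub_self, comp_zero]
  have hI : IsZero (Abelian.image g) := tp.isZero_of_isZero_map G hex
    (fun x hx => hT' x x hx hx) (fun x hx => hF' x x hx hx) (.of_mono_eq_zero _ hι)
  rw [← Abelian.image.fac g, hI.eq_of_src (Abelian.image.ι g), comp_zero]

lemma map_surjective_of_torsion_ses (tpA : TorsionPair A T F)
    (hex : ∀ S : ShortComplex A', S.ShortExact → (S.map G).ShortExact)
    (hT' : ∀ x y : A', T' x → T' y → Function.Surjective (fun g : x ⟶ y => G.map g))
    (hF' : ∀ x y : A', F' x → F' y → Function.Surjective (fun g : x ⟶ y => G.map g))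
    (hsurj : ∀ f t : A', F' f → T' t → Function.Surjective (fun g : f ⟶ t => G.map g))
    (hinj : ∀ f t : A', F' f → T' t → ∀ s s' : SES A' f t,
      ExtEquiv A (.base (mapSES A G hex s)) (.base (mapSES A G hex s')) →
        ExtEquiv A' (.base s) (.base s'))
    {tX fX tY fY : A'} (sX : SES A' fX tX) (sY : SES A' fY tY)
    (htX : T' tX) (hfX : F' fX) (htY : T' tY) (hfY : F' fY)
    (hT : T (G.obj tX)) (hF : F (G.obj fY)) :
    Function.Surjective (fun g : sX.E ⟶ sY.E => G.map g) := by
  intro h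
  obtain ⟨α, β, hα, hβ⟩ := (mapSES A G hex sX).exists_comm_sq_of_comp_comp_eq_zero
    (mapSES A G hex sY) h (tpA.hom_zero hT hF _)
  obtain ⟨a, rfl⟩ := hT' tX tY htX htY α
  obtain ⟨b, rfl⟩ := hF' fX fY hfX hfY β
  obtain ⟨g, hg₁, hg₂⟩ := extHom_base_iff.1 <|
    (extHom_base_iff.2 ⟨h, hα, hβ⟩).of_map_base G hex (hinj fX tY hfX htY)
  dsimp only [mapSES] at hα hβ
  have hd₁ : G.map sX.i ≫ (h - G.map g) = 0 := by
    rw [Preadditive.comp_sub, hα, sub_eq_zero, ← G.map_comp, ← G.map_comp, hg₁]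
  have hd₂ : (h - G.map g) ≫ G.map sY.p = 0 := by
    rw [Preadditive.sub_comp, ← hβ, sub_eq_zero, ← G.map_comp, ← G.map_comp, hg₂]
  obtain ⟨c, hc⟩ :=
    (mapSES A G hex sX).exists_eq_comp_of_comp_eq_zero (mapSES A G hex sY) _ hd₁ hd₂
  obtain ⟨c, rfl⟩ := hsurj fX tY hfX htY c
  have hh : h = G.map g + G.map sX.p ≫ G.map c ≫ G.map sY.i := sub_eq_iff_eq_add'.1 hc
  refine ⟨g + sX.p ≫ c ≫ sY.i, ?_⟩
  dsimp only
  rw [G.map_add, G.map_comp, G.map_comp, hh]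

lemma TorsionPair.full_of_surjective_map (tpA : TorsionPair A T F) (tpA' : TorsionPair A' T' F')
    (hex : ∀ S : ShortComplex A', S.ShortExact → (S.map G).ShortExact)
    (hT : ∀ x : A', T' x → T (G.obj x)) (hF : ∀ x : A', F' x → F (G.obj x))
    (hT' : ∀ x y : A', T' x → T' y → Function.Surjective (fun g : x ⟶ y => G.map g))
    (hF' : ∀ x y : A', F' x → F' y → Function.Surjective (fun g : x ⟶ y => G.map g))
    (hsurj : ∀ f t : A', F' f → T' t → Function.Surjective (fun g : f ⟶ t => G.map g))
    (hinj : ∀ f t : A', F' f → T' t → ∀ s s' : SES A' f t,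
      ExtEquiv A (.base (mapSES A G hex s)) (.base (mapSES A G hex s')) →
        ExtEquiv A' (.base s) (.base s')) :
    G.Full := by
  refine ⟨fun {X Y} => ?_⟩
  obtain ⟨tX, fX, iX, pX, wX, htX, hfX, hsX⟩ := tpA'.exists_ses X
  obtain ⟨tY, fY, iY, pY, wY, htY, hfY, hsY⟩ := tpA'.exists_ses Y
  exact map_surjective_of_torsion_ses G tpA hex hT' hF' hsurj hinj ⟨X, iX, pX, wX, hsX⟩
    ⟨Y, iY, pY, wY, hsY⟩ htX hfX htY hfY (hT tX htX) (hF fY hfY)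

lemma TorsionPair.exists_torsion_preimage (tpA : TorsionPair A T F)
    (tpA' : TorsionPair A' T' F') [G.Faithful]
    (hex : ∀ S : ShortComplex A', S.ShortExact → (S.map G).ShortExact)
    (hF : ∀ x : A', F' x → F (G.obj x)) {X : A'} {x : A} (e : G.obj X ≅ x) (hx : T x) :
    ∃ x' : A', T' x' ∧ Nonempty (G.obj x' ≅ x) := by
  obtain ⟨t, f, i, p, w, ht, hf, hs⟩ := tpA'.exists_ses X
  have : Epi (G.map p) := (hex _ hs).epi_g
  have hp : G.map p = 0 := by
    rw [← cancel_epi e.inv, comp_zero]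
    exact tpA.hom_zero hx (hF f hf) _
  have := hs.isIso_f_iff.2 <| isZero_of_injective_map G G.map_injective (.of_epi_eq_zero _ hp)
  exact ⟨t, ht, ⟨G.mapIso (asIso i) ≪≫ e⟩⟩

lemma TorsionPair.exists_torsionFree_preimage (tpA : TorsionPair A T F)
    (tpA' : TorsionPair A' T' F') [G.Faithful]
    (hex : ∀ S : ShortComplex A', S.ShortExact → (S.map G).ShortExact)
    (hT : ∀ x : A', T' x → T (G.obj x)) {X : A'} {x : A} (e : G.obj X ≅ x) (hx : F x) :
    ∃ x' : A', F' x' ∧ Nonempty (G.obj x' ≅ x) := by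
  obtain ⟨t, f, i, p, w, ht, hf, hs⟩ := tpA'.exists_ses X
  have : Mono (G.map i) := (hex _ hs).mono_f
  have hi : G.map i = 0 := by
    rw [← cancel_mono e.hom, zero_comp]
    exact tpA.hom_zero (hT t ht) hx _
  have := hs.isIso_g_iff.2 <| isZero_of_injective_map G G.map_injective (.of_mono_eq_zero _ hi)
  exact ⟨f, hf, ⟨(G.mapIso (asIso p)).symm ≪≫ e⟩⟩

lemma TorsionPair.essSurj_of_lifts (tpA : TorsionPair A T F)
    (hex : ∀ S : ShortComplex A', S.ShortExact → (S.map G).ShortExact)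
    (hT : ∀ x : A, T x → ∃ x' : A', T' x' ∧ Nonempty (G.obj x' ≅ x))
    (hF : ∀ x : A, F x → ∃ x' : A', F' x' ∧ Nonempty (G.obj x' ≅ x))
    (hext : ∀ f t : A', F' f → T' t → ∀ sA : SES A (G.obj f) (G.obj t),
      ∃ s' : SES A' f t, ExtEquiv A (.base (mapSES A G hex s')) (.base sA)) :
    G.EssSurj := by
  refine ⟨fun x => ?_⟩
  obtain ⟨t, f, i, p, w, ht, hf, hs⟩ := tpA.exists_ses x
  obtain ⟨t', ht', ⟨u⟩⟩ := hT t ht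
  obtain ⟨f', hf', ⟨v⟩⟩ := hF f hf
  let sA : SES A (G.obj f') (G.obj t') :=
    { E := x, i := u.hom ≫ i, p := p ≫ v.inv, w := by simp [reassoc_of% w]
      ex := ShortComplex.shortExact_of_iso
        (ShortComplex.isoMk u.symm (Iso.refl x) v.symm (by simp) (by simp)) hs }
  obtain ⟨s', hs'⟩ := hext f' t' hf' ht' sA
  obtain ⟨e, he, -, -⟩ := (extEquiv_one_iff.1 hs').exists_isIso_base
  exact ⟨s'.E, ⟨@asIso _ _ _ _ e he⟩⟩

end Criterion

/-- Under the hypotheses of the fully-faithfulness criterion, `G` is an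
equivalence iff its restrictions to the torsion(-free) classes are equivalences and it
induces isomorphisms on `Yext^1(F', T')`. -/
theorem statement_16 {A A' : Type*} [Category A] [Abelian A] [Category A'] [Abelian A']
    {T F : A → Prop} {T' F' : A' → Prop}
    (tpA : TorsionPair A T F) (tpA' : TorsionPair A' T' F')
    (G : A' ⥤ A) [G.Additive]
    (hex : ∀ S : ShortComplex A', S.ShortExact → (S.map G).ShortExact)
    (hT : ∀ x : A', T' x → T (G.obj x)) (hF : ∀ x : A', F' x → F (G.obj x))
    (hffT : ∀ x y : A', T' x → T' y → Function.Bijective (fun g : x ⟶ y => G.map g))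
    (hffF : ∀ x y : A', F' x → F' y → Function.Bijective (fun g : x ⟶ y => G.map g))
    (hsurj : ∀ f t : A', F' f → T' t → Function.Surjective (fun g : f ⟶ t => G.map g))
    (hinj : ∀ f t : A', F' f → T' t → ∀ s s' : SES A' f t,
      ExtEquiv A (.base (mapSES A G hex s)) (.base (mapSES A G hex s')) →
        ExtEquiv A' (.base s) (.base s')) :
    G.IsEquivalence ↔
      ((∀ x : A, T x → ∃ x' : A', T' x' ∧ Nonempty (G.obj x' ≅ x)) ∧
       (∀ x : A, F x → ∃ x' : A', F' x' ∧ Nonempty (G.obj x' ≅ x)) ∧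
       (∀ f t : A', F' f → T' t → ∀ sA : SES A (G.obj f) (G.obj t),
          ∃ s' : SES A' f t, ExtEquiv A (.base (mapSES A G hex s')) (.base sA))) := by
  constructor
  · intro _
    exact ⟨fun x => tpA.exists_torsion_preimage G tpA' hex hF (G.objObjPreimageIso x),
      fun x => tpA.exists_torsionFree_preimage G tpA' hex hT (G.objObjPreimageIso x),
      fun _ _ _ _ sA => exists_extEquiv_mapSES G hex sA (G.objObjPreimageIso sA.E)⟩
  · rintro ⟨hTess, hFess, hext⟩
    have := tpA'.faithful_of_injective_map G hex (fun x y hx hy => (hffT x y hx hy).1)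
      (fun x y hx hy => (hffF x y hx hy).1)
    have := tpA.full_of_surjective_map G tpA' hex hT hF (fun x y hx hy => (hffT x y hx hy).2)
      (fun x y hx hy => (hffF x y hx hy).2) hsurj hinj
    have := tpA.essSurj_of_lifts G hex hTess hFess hext
    exact { }

end HRS
end
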